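/- arXiv:2512.12897 — 2 statements merged into one kernel-verified Lean document; each statement's English description precedes it below -/
import Mathlib

section
/- Let r be a natural number, let h be an r×r positive definite (Hermitian) complex matrix, and let A be an r×r complex matrix such that h·A is Hermitian (i.e. A is self-adjoint with respect to the inner product defined by h). Then the matrix h·exp(A) is positive definite (in particular Hermitian), where exp denotes the matrix exponential. -/
open NormedSpace Matrix
open scoped ComplexOrder
open scoped MatrixOrder

/-- If `D` is invertible, then `Dᴴ * D` is positive definite. -/
lemma posDef_conjTranspose_mul_self_of_isUnit {r : ℕ}
    (D : Matrix (Fin r) (Fin r) ℂ) (hD : IsUnit D) : (Dᴴ * D).PosDef := by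
  have hps : (Dᴴ * D).PosSemidef := Matrix.posSemidef_conjTranspose_mul_self D
  refine posDef_iff_dotProduct_mulVec.mpr ⟨hps.1, fun x hx => ?_⟩
  refine lt_of_le_of_ne (hps.dotProduct_mulVec_nonneg x) fun h0 => hx ?_
  have h1 : (Dᴴ * D) *ᵥ x = 0 := (hps.dotProduct_mulVec_zero_iff x).mp h0.symm
  have hdet : IsUnit D.det := (Matrix.isUnit_iff_isUnit_det D).mp hD
  have hunit : IsUnit (Dᴴ * D) := by
    rw [Matrix.isUnit_iff_isUnit_det, Matrix.det_mul, Matrix.det_conjTranspose]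
    exact hdet.star.mul hdet
  have hinj : Function.Injective ((Dᴴ * D).mulVec) :=
    Matrix.mulVec_injective_iff_isUnit.mpr hunit
  have := hinj (a₁ := x) (a₂ := 0) (by simpa using h1)
  simpa using this

set_option maxHeartbeats 1600000 in
/-- The matrix form of the correspondence `a ∈ Herm(E,H) ↦ h(a) = H ∘ exp(a) ∈ Herm⁺(E)`:
if `h` is positive definite and `h·A` is Hermitian, then `h·exp(A)` is positive definite. -/
theorem posDef_mul_exp
    (r : ℕ) (h A : Matrix (Fin r) (Fin r) ℂ) (hh : h.PosDef)
    (hA : (h * A).IsHermitian) :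
    (h * exp A).PosDef := by
  set g : Matrix (Fin r) (Fin r) ℂ := CFC.sqrt h with hg_def
  have hg : g.PosSemidef := (CFC.sqrt_nonneg h).posSemidef
  have hgH : gᴴ = g := hg.1
  have hgg : g * g = h := CFC.sqrt_mul_sqrt_self h hh.posSemidef.nonneg
  -- g is a unit
  have hdetg : IsUnit g.det := by
    have hd : g.det * g.det = h.det := by rw [← Matrix.det_mul, hgg]
    have hdet : h.det ≠ 0 := ne_of_gt hh.det_pos
    exact isUnit_iff_ne_zero.mpr fun h0 => hdet (by rw [← hd, h0, mul_zero])
  have hgu : IsUnit g := (Matrix.isUnit_iff_isUnit_det g).mpr hdetg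
  haveI : Invertible g := g.invertibleOfIsUnitDet hdetg
  have hginv : g⁻¹ * g = 1 := Matrix.nonsing_inv_mul g hdetg
  have hginv' : g * g⁻¹ = 1 := Matrix.mul_nonsing_inv g hdetg
  -- B = g A g⁻¹ is Hermitian
  set B : Matrix (Fin r) (Fin r) ℂ := g * A * g⁻¹ with hB_def
  have hAhh : Aᴴ * h = h * A := by
    have := hA.eq
    rw [Matrix.conjTranspose_mul, hh.isHermitian.eq] at this
    exact this
  have hBH : B.IsHermitian := by
    have hginvH : g⁻¹ᴴ = g⁻¹ := by
      rw [Matrix.conjTranspose_nonsing_inv, hgH]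
    have h2 : Aᴴ * (g * g) = g * (g * A) := by
      rw [hgg, ← Matrix.mul_assoc, hgg]; exact hAhh
    have key : g⁻¹ * Aᴴ * g = g * A * g⁻¹ := by
      have h3 := congrArg (fun M => g⁻¹ * M * g⁻¹) h2
      simp only [Matrix.mul_assoc, Matrix.inv_mul_cancel_left_of_invertible] at h3
      calc g⁻¹ * Aᴴ * g
          = g⁻¹ * (Aᴴ * (g * (g * g⁻¹))) := by rw [hginv', Matrix.mul_one, Matrix.mul_assoc]
        _ = g * A * g⁻¹ := by
            simp only [← Matrix.mul_assoc] at h3 ⊢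
            simp only [Matrix.mul_assoc] at h3 ⊢
            exact h3
    show Bᴴ = B
    rw [hB_def, Matrix.conjTranspose_mul, Matrix.conjTranspose_mul, hginvH, hgH,
      ← Matrix.mul_assoc, key]
  -- exp B = g * exp A * g⁻¹
  have hexpB : exp B = g * exp A * g⁻¹ := Matrix.exp_conj g A hgu
  -- exp B = C * C where C = exp((1/2)•B) is Hermitian
  set C : Matrix (Fin r) (Fin r) ℂ := exp ((1/2 : ℂ) • B) with hC_def
  have hCH : Cᴴ = C := by
    rw [hC_def, ← Matrix.exp_conjTranspose]
    congr 1
    rw [Matrix.conjTranspose_smul, hBH.eq]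
    norm_num
  have h12 : (1/2 : ℂ) • B + (1/2 : ℂ) • B = B := by
    rw [← add_smul]; norm_num
  have hCC : C * C = exp B := by
    calc C * C = exp ((1/2 : ℂ) • B + (1/2 : ℂ) • B) :=
          (Matrix.exp_add_of_commute _ _ (Commute.refl _)).symm
      _ = exp B := by rw [h12]
  have hCu : IsUnit C := Matrix.isUnit_exp _
  -- h * exp A = (C * g)ᴴ * (C * g)
  have hkey : h * exp A = (C * g)ᴴ * (C * g) := by
    rw [Matrix.conjTranspose_mul, hCH, hgH]
    calc h * exp A = g * (g * exp A * g⁻¹) * g := by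
          rw [← hgg]
          simp only [Matrix.mul_assoc, Matrix.inv_mul_cancel_left_of_invertible]
          rw [hginv, Matrix.mul_one]
      _ = g * (C * C) * g := by rw [← hexpB, hCC]
      _ = g * C * (C * g) := by simp only [Matrix.mul_assoc]
  rw [hkey]
  exact posDef_conjTranspose_mul_self_of_isUnit _ (hCu.mul hgu)
end

section
/- Let r be a natural number and let h₀, h₁ be r×r positive definite (Hermitian) complex matrices. Then there exists a unique r×r complex matrix A such that h₀·A is Hermitian and h₁ = h₀·exp(A), where exp denotes the matrix exponential. -/
open NormedSpace Matrix
open scoped ComplexOrder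

/-- The matrix form of the bijectivity of the correspondence
`a ∈ Herm(E,H) ↦ h(a) = H ∘ exp(a) ∈ Herm⁺(E)`: for positive definite matrices
`h₀, h₁` there is a unique matrix `A` with `h₀·A` Hermitian and `h₁ = h₀·exp(A)`. -/
theorem existsUnique_log_hermitian
    (r : ℕ) (h₀ h₁ : Matrix (Fin r) (Fin r) ℂ)
    (hh₀ : h₀.PosDef) (hh₁ : h₁.PosDef) :
    ∃! A : Matrix (Fin r) (Fin r) ℂ, (h₀ * A).IsHermitian ∧ h₁ = h₀ * exp A := by
  classical
  letI : NormedRing (Matrix (Fin r) (Fin r) ℂ) := Matrix.instL2OpNormedRing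
  letI : NormedAlgebra ℂ (Matrix (Fin r) (Fin r) ℂ) := Matrix.instL2OpNormedAlgebra
  obtain ⟨S, hS, hSS⟩ : ∃ S : Matrix (Fin r) (Fin r) ℂ, S.PosSemidef ∧ S * S = h₀ := by
    open scoped MatrixOrder in
    exact ⟨CFC.sqrt h₀, (CFC.sqrt_nonneg h₀).posSemidef,
      CFC.sqrt_mul_sqrt_self h₀ hh₀.posSemidef.nonneg⟩
  have hSherm : S.IsHermitian := hS.1
  have hdet : IsUnit S.det := by
    have h : S.det * S.det = h₀.det := by rw [← det_mul, hSS]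
    have h0 : h₀.det ≠ 0 := ne_of_gt hh₀.det_pos
    have hne : S.det ≠ 0 := by
      intro hs
      rw [hs, mul_zero] at h
      exact h0 h.symm
    exact hne.isUnit
  have hSunit : IsUnit S := (isUnit_iff_isUnit_det S).2 hdet
  have hSinv : S * S⁻¹ = 1 := mul_nonsing_inv S hdet
  have hinvS : S⁻¹ * S = 1 := nonsing_inv_mul S hdet
  have hSinvherm : (S⁻¹).IsHermitian := hSherm.inv
  have e1 : ∀ M : Matrix (Fin r) (Fin r) ℂ, S * (S⁻¹ * M) = M := fun M => by
    rw [← mul_assoc, hSinv, one_mul]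
  have e2 : ∀ M : Matrix (Fin r) (Fin r) ℂ, S⁻¹ * (S * M) = M := fun M => by
    rw [← mul_assoc, hinvS, one_mul]
  set C := S⁻¹ * h₁ * S⁻¹ with hCdef
  have hCherm : C.IsHermitian := by
    show Cᴴ = C
    rw [hCdef, conjTranspose_mul, conjTranspose_mul, hSinvherm.eq, hh₁.isHermitian.eq, mul_assoc]
  have hCpos : C.PosDef := by
    have := hh₁.conjTranspose_mul_mul_same (B := S⁻¹) (fun u v huv => by
      simpa [mulVec_mulVec, hSinv] using congrArg (fun w => S *ᵥ w) huv)
    rwa [hSinvherm.eq] at this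
  have hCsa : IsSelfAdjoint C := hCherm
  have hCspec : ∀ x ∈ spectrum ℝ C, 0 < x := by
    rw [hCherm.spectrum_real_eq_range_eigenvalues]
    rintro x ⟨i, rfl⟩
    exact hCpos.eigenvalues_pos i
  set B := CFC.log C with hBdef
  have hBsa : IsSelfAdjoint B := IsSelfAdjoint.log
  have hBherm : B.IsHermitian := hBsa
  have hexpB : exp B = C := by
    open scoped MatrixOrder in
    exact CFC.exp_log C hCpos.isStrictlyPositive
  -- key step: any solution `A` conjugates to `B`
  have key : ∀ A : Matrix (Fin r) (Fin r) ℂ,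
      (h₀ * A).IsHermitian → h₁ = h₀ * exp A → S * A * S⁻¹ = B := by
    intro A hherm hexp
    have hAstar : Aᴴ * (S * S) = S * S * A := by
      have h := hherm.eq
      rw [conjTranspose_mul, hh₀.isHermitian.eq] at h
      rw [hSS]
      exact h
    have hB'sa : IsSelfAdjoint (S * A * S⁻¹) := by
      show (S * A * S⁻¹)ᴴ = S * A * S⁻¹
      rw [conjTranspose_mul, conjTranspose_mul, hSinvherm.eq, hSherm.eq]
      have h2 := congrArg (fun M => S⁻¹ * M * S⁻¹) hAstar
      simp only [mul_assoc, e1, e2, hSinv, hinvS, mul_one, one_mul] at h2 ⊢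
      exact h2
    have hexpB' : exp (S * A * S⁻¹) = C := by
      rw [Matrix.exp_conj S A hSunit, hCdef]
      have : h₁ = S * S * exp A := by rw [hSS]; exact hexp
      rw [this]
      simp only [mul_assoc, e1, e2, hSinv, hinvS, mul_one, one_mul]
    calc S * A * S⁻¹ = CFC.log (exp (S * A * S⁻¹)) := (CFC.log_exp _ hB'sa).symm
      _ = B := by rw [hexpB', hBdef]
  refine ⟨S⁻¹ * B * S, ⟨?_, ?_⟩, fun y hy => ?_⟩
  · -- h₀ * A₀ is Hermitian
    have hh : h₀ * (S⁻¹ * B * S) = S * B * S := by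
      rw [← hSS]
      simp only [mul_assoc, e1, e2]
    rw [hh]
    show (S * B * S)ᴴ = S * B * S
    rw [conjTranspose_mul, conjTranspose_mul, hSherm.eq, hBherm.eq, mul_assoc]
  · -- h₁ = h₀ * exp (A₀)
    rw [Matrix.exp_conj' S B hSunit, hexpB, hCdef, ← hSS]
    simp only [mul_assoc, e1, e2, hSinv, hinvS, mul_one, one_mul]
  · -- uniqueness
    have k1 := key y hy.1 hy.2
    calc y = S⁻¹ * (S * y * S⁻¹) * S := by
          simp only [mul_assoc, e1, e2, hSinv, hinvS, mul_one, one_mul]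
      _ = S⁻¹ * B * S := by rw [k1]
end
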